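/- Fix a natural number k ≥ 1. For each natural number N ≥ 1 let P̃_{k,N} = I + (2/√N)·U be the (k+1)×(k+1) real matrix, where U is the upper shift matrix (U[i, i+1] = 1 and all other entries 0). Then: (a) for every natural number n, the (1, k+1) entry of (P̃_{k,N})ⁿ equals binom(n, k)·(2/√N)^k; (b) for every real c ≥ 0, lim_{N→∞} of the (1, k+1) entry of (P̃_{k,N})^{⌊c·√N⌋} equals (2c)^k / k!. (This is the paper's lower-bound computation: the amplitude transported along a path of k+1 Grover operators, with the backward-rotation terms removed, after ⌊c√N⌋ steps tends to (2c)^k/k!.) -/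

import Mathlib

/-!
Since `1` commutes with the nilpotent shift `U`, the binomial theorem gives
`(1 + tU)ⁿ = ∑ₘ C(n, m) tᵐ Uᵐ`, and `Uᵐ` has its ones exactly on the `m`-th superdiagonal.
For the limit, `C(n, k) tᵏ = ∏_{j<k} (n - j) t / k!` and each factor `(n - j) t` tends to `2c`
when `n = ⌊c√N⌋` and `t = 2/√N`.
-/

open Matrix Filter

/-- The upper shift matrix on `Fin (k+1)`. -/
def upperShift (k : ℕ) : Matrix (Fin (k + 1)) (Fin (k + 1)) ℝ :=
  fun i j => if (i : ℕ) + 1 = (j : ℕ) then 1 else 0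

/-- The approximated path matrix `P̃_{k,N} = I + (2/√N)·U`. -/
noncomputable def Ptilde (k N : ℕ) : Matrix (Fin (k + 1)) (Fin (k + 1)) ℝ :=
  1 + (2 / Real.sqrt N) • upperShift k

open Finset Topology Nat

lemma upperShift_pow_apply (k m : ℕ) (i j : Fin (k + 1)) :
    (upperShift k ^ m) i j = if (i : ℕ) + m = j then 1 else 0 := by
  induction m generalizing j with
  | zero => simp [one_apply, Fin.ext_iff]
  | succ m ih =>
    simp only [pow_succ, mul_apply, ih, upperShift, mul_ite, mul_one, mul_zero, ← ite_and]
    by_cases h : (i : ℕ) + (m + 1) = j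
    · rw [if_pos h, Fintype.sum_eq_single ⟨i + m, by omega⟩ fun x hx => if_neg ?_]
      · simp only [and_self, if_pos, ← h, add_assoc]
      · rintro ⟨-, hx'⟩
        exact hx (Fin.ext hx'.symm)
    · rw [if_neg h]
      exact sum_eq_zero fun x _ => if_neg (by omega)

lemma one_add_smul_upperShift_pow_apply {k : ℕ} (t : ℝ) (n m : ℕ) {i j : Fin (k + 1)}
    (hij : (i : ℕ) + m = j) :
    ((1 + t • upperShift k) ^ n) i j = n.choose m * t ^ m := by
  have hterm : ∀ p q : ℕ, (n.choose p • ((t • upperShift k) ^ p * 1 ^ q)) i j =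
      if p = m then (n.choose p : ℝ) * t ^ p else 0 := by
    intro p q
    simp only [one_pow, mul_one, smul_pow, Matrix.smul_apply, upperShift_pow_apply]
    simp only [← hij, add_right_inj, nsmul_eq_mul, smul_eq_mul, mul_ite, mul_one, mul_zero]
  rw [add_comm (1 : Matrix _ _ ℝ), (Commute.one_right _).add_pow', Matrix.sum_apply,
    Nat.sum_antidiagonal_eq_sum_range_succ_mk]
  simp only [hterm, sum_ite_eq', mem_range, ite_eq_left_iff, not_lt]
  intro hnm
  rw [Nat.choose_eq_zero_of_lt (by omega), cast_zero, zero_mul]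

lemma tendsto_choose_mul_pow {α : Type*} {l : Filter α} {n : α → ℕ} {t : α → ℝ} {L : ℝ}
    (k : ℕ) (hnt : Tendsto (fun a => n a * t a) l (𝓝 L)) (ht : Tendsto t l (𝓝 0)) :
    Tendsto (fun a => ((n a).choose k : ℝ) * t a ^ k) l (𝓝 (L ^ k / k !)) := by
  have hfactor : ∀ j : ℕ, Tendsto (fun a => (n a - j) * t a) l (𝓝 L) := fun j => by
    simpa [sub_mul] using hnt.sub (ht.const_mul (j : ℝ))
  have := (tendsto_finsetProd (range k) fun j _ => hfactor j).div_const (k ! : ℝ)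
  rw [prod_const, card_range] at this
  refine this.congr fun a => ?_
  rw [Nat.cast_choose_eq_descPochhammer_div, descPochhammer_eval_eq_prod_range,
    prod_mul_distrib, prod_const, card_range, div_mul_eq_mul_div]

lemma tendsto_sqrt_natCast_atTop : Tendsto (fun N : ℕ => √N) atTop atTop :=
  Real.tendsto_sqrt_atTop.comp tendsto_natCast_atTop_atTop

lemma tendsto_const_div_sqrt_natCast (a : ℝ) : Tendsto (fun N : ℕ => a / √N) atTop (𝓝 0) :=
  tendsto_const_nhds.div_atTop tendsto_sqrt_natCast_atTop

lemma tendsto_floor_mul_sqrt_mul_div_sqrt (a : ℝ) {c : ℝ} (hc : 0 ≤ c) :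
    Tendsto (fun N : ℕ => (⌊c * √N⌋₊ : ℝ) * (a / √N)) atTop (𝓝 (a * c)) := by
  refine ((tendsto_nat_floor_mul_div_atTop hc).comp tendsto_sqrt_natCast_atTop).const_mul a
    |>.congr fun N => ?_
  simp only [Function.comp_apply]
  ring

theorem path_matrix_corner_entry_general (k : ℕ) :
    (∀ N : ℕ, 1 ≤ N → ∀ n : ℕ,
      (Ptilde k N ^ n) 0 (Fin.last k) = (n.choose k : ℝ) * (2 / Real.sqrt N) ^ k) ∧
    (∀ c : ℝ, 0 ≤ c →
      Tendsto (fun N : ℕ => (Ptilde k N ^ ⌊c * Real.sqrt N⌋₊) 0 (Fin.last k))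
        atTop (nhds ((2 * c) ^ k / (Nat.factorial k : ℝ)))) := by
  have corner (N n : ℕ) :
      (Ptilde k N ^ n) 0 (Fin.last k) = (n.choose k : ℝ) * (2 / Real.sqrt N) ^ k :=
    one_add_smul_upperShift_pow_apply _ n k (by simp)
  refine ⟨fun N _ n => corner N n, fun c hc => ?_⟩
  simp only [corner]
  exact tendsto_choose_mul_pow k (tendsto_floor_mul_sqrt_mul_div_sqrt 2 hc)
    (tendsto_const_div_sqrt_natCast 2)

theorem path_matrix_corner_entry (k : ℕ) (hk : 1 ≤ k) :
    (∀ N : ℕ, 1 ≤ N → ∀ n : ℕ,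
      (Ptilde k N ^ n) 0 (Fin.last k) = (n.choose k : ℝ) * (2 / Real.sqrt N) ^ k) ∧
    (∀ c : ℝ, 0 ≤ c →
      Tendsto (fun N : ℕ => (Ptilde k N ^ ⌊c * Real.sqrt N⌋₊) 0 (Fin.last k))
        atTop (nhds ((2 * c) ^ k / (Nat.factorial k : ℝ)))) :=
  path_matrix_corner_entry_general k
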